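/- arXiv:2603.10196 — 3 statements merged into one kernel-verified Lean document; each statement's English description precedes it below -/
import Mathlib

section
/- Let P : ℕ → ℝ be a probability distribution supported on {1,...,n}, and define the reuse-term footprint rtfp(x) = m - ∑_{i=x+1}^{n} (i - x)·P(i), where m = ∑_{i=1}^{n} i·P(i). Then rtfp(0) = 0 (the Zero Footprint lemma), rtfp(x) is nondecreasing in x, and rtfp(x) = m for all x ≥ n. -/
/-! The increment `rtfp (x + 1) - rtfp x` is the tail mass `∑_{i>x} P(i) ≥ 0`, so the footprint
is monotone; at `x = 0` the reuse term is `m` itself, and for `x ≥ n` it is an empty sum. -/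

open Finset

noncomputable def reuseTerm (n : ℕ) (P : ℕ → ℝ) (x : ℕ) : ℝ :=
  ∑ i ∈ Icc (x + 1) n, ((i : ℝ) - x) * P i

namespace reuseTerm

variable {n : ℕ} {P : ℕ → ℝ}

theorem zero_eq : reuseTerm n P 0 = ∑ i ∈ Icc 1 n, (i : ℝ) * P i := by
  simp [reuseTerm]

theorem eq_zero_of_le {x : ℕ} (hx : n ≤ x) : reuseTerm n P x = 0 := by
  rw [reuseTerm, Icc_eq_empty (by omega), sum_empty]

theorem eq_succ_add (x : ℕ) :
    reuseTerm n P x = reuseTerm n P (x + 1) + ∑ i ∈ Icc (x + 1) n, P i := by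
  have hdrop : ∑ i ∈ Icc (x + 1 + 1) n, ((i : ℝ) - (x + 1 : ℕ)) * P i
      = ∑ i ∈ Icc (x + 1) n, ((i : ℝ) - (x + 1 : ℕ)) * P i := by
    refine sum_subset (Icc_subset_Icc_left (by omega)) fun i hi hi' => ?_
    obtain rfl : i = x + 1 := by simp only [mem_Icc] at hi hi'; omega
    simp
  rw [reuseTerm, reuseTerm, hdrop, ← sum_add_distrib]
  refine sum_congr rfl fun i _ => ?_
  push_cast
  ring

theorem antitone (hP : ∀ i, 0 ≤ P i) : Antitone (reuseTerm n P) :=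
  antitone_nat_of_succ_le fun x => by
    rw [eq_succ_add x]
    exact le_add_of_nonneg_right (sum_nonneg fun i _ => hP i)

end reuseTerm

theorem reuse_term_footprint_properties_general
    (n : ℕ) (P : ℕ → ℝ)
    (hP : ∀ x, 0 ≤ P x)
    (m : ℝ) (hm : m = ∑ i ∈ Finset.Icc 1 n, (i : ℝ) * P i)
    (rtfp : ℕ → ℝ)
    (hrtfp : ∀ x, rtfp x = m - ∑ i ∈ Finset.Icc (x + 1) n, ((i : ℝ) - (x : ℝ)) * P i) :
    rtfp 0 = 0 ∧ Monotone rtfp ∧ ∀ x, n ≤ x → rtfp x = m := by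
  obtain rfl : rtfp = fun x => m - reuseTerm n P x := funext hrtfp
  refine ⟨?_, ?_, fun x hx => ?_⟩
  · simp only [reuseTerm.zero_eq, hm, sub_self]
  · exact fun _ _ hxy => sub_le_sub_left (reuseTerm.antitone hP hxy) m
  · simp only [reuseTerm.eq_zero_of_le hx, sub_zero]

/-- The reuse-term footprint: `rtfp(0) = 0` (Zero Footprint lemma),
`rtfp` is nondecreasing, and `rtfp(x) = m` for all `x ≥ n`. -/
theorem reuse_term_footprint_properties
    (n : ℕ) (P : ℕ → ℝ)
    (hP : ∀ x, 0 ≤ P x)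
    (hsupp : ∀ x, P x ≠ 0 → x ∈ Finset.Icc 1 n)
    (hsum : ∑ x ∈ Finset.Icc 1 n, P x = 1)
    (m : ℝ) (hm : m = ∑ i ∈ Finset.Icc 1 n, (i : ℝ) * P i)
    (rtfp : ℕ → ℝ)
    (hrtfp : ∀ x, rtfp x = m - ∑ i ∈ Finset.Icc (x + 1) n, ((i : ℝ) - (x : ℝ)) * P i) :
    rtfp 0 = 0 ∧ Monotone rtfp ∧ ∀ x, n ≤ x → rtfp x = m :=
  reuse_term_footprint_properties_general n P hP m hm rtfp hrtfp
end

section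
/- Let P : ℕ → ℝ be a probability distribution supported on {1,...,n}, let m = ∑_{i=1}^{n} i·P(i), and define rtfp(x) = m - ∑_{i=x+1}^{n} (i-x)·P(i) and s(x) = ∑_{i=1}^{n} min(i,x)·P(i). Then rtfp(x) = s(x) for all x ≥ 0; i.e., the reuse-term footprint equals the Denning Recursion working-set size. -/
/-! Pointwise, `i - (i - x)₊ = min i x`: the reuse term `(i - x)₊` of a reuse interval `i` is
exactly what the window of length `x` misses, so subtracting the expected reuse term from the
mean reuse interval leaves the expected truncated interval `min i x`, which is the working-set
size. -/

open Finset

variable {R : Type*}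

theorem sum_Icc_succ_sub_mul_eq_sum_tsub_mul [CommRing R] (f : ℕ → R) (x n : ℕ) :
    ∑ i ∈ Icc (x + 1) n, ((i : R) - x) * f i = ∑ i ∈ Icc 1 n, ((i - x : ℕ) : R) * f i := by
  have hsub : Icc (x + 1) n ⊆ Icc 1 n := Icc_subset_Icc_left (by omega)
  refine (sum_congr rfl fun i hi => ?_).trans (sum_subset hsub fun i hi hni => ?_)
  · rw [Nat.cast_sub (Nat.le_of_succ_le (mem_Icc.1 hi).1)]
  · rw [Nat.sub_eq_zero_of_le (by simp only [mem_Icc] at hi hni; omega), Nat.cast_zero, zero_mul]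

theorem sum_mul_sub_sum_Icc_succ_eq_sum_min_mul
    [CommRing R] [LinearOrder R] [IsStrictOrderedRing R] (f : ℕ → R) (x n : ℕ) :
    ∑ i ∈ Icc 1 n, (i : R) * f i - ∑ i ∈ Icc (x + 1) n, ((i : R) - x) * f i
      = ∑ i ∈ Icc 1 n, (min i x : R) * f i := by
  rw [sum_Icc_succ_sub_mul_eq_sum_tsub_mul, ← sum_sub_distrib]
  refine sum_congr rfl fun i _ => ?_
  rw [← sub_mul, ← Nat.cast_sub (Nat.sub_le i x), Nat.sub_sub_eq_min, Nat.cast_min]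

theorem rtfp_eq_working_set_general
    (n : ℕ) (P : ℕ → ℝ)
    (m : ℝ) (hm : m = ∑ i ∈ Finset.Icc 1 n, (i : ℝ) * P i)
    (rtfp s : ℕ → ℝ)
    (hrtfp : ∀ x, rtfp x = m - ∑ i ∈ Finset.Icc (x + 1) n, ((i : ℝ) - (x : ℝ)) * P i)
    (hs : ∀ x, s x = ∑ i ∈ Finset.Icc 1 n, (min i x : ℝ) * P i) :
    ∀ x, rtfp x = s x := by
  intro x
  rw [hrtfp, hs, hm, sum_mul_sub_sum_Icc_succ_eq_sum_min_mul]

/-- Working-set Correctness: the reuse-term footprint equals the Denning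
Recursion working-set size. -/
theorem rtfp_eq_working_set
    (n : ℕ) (P : ℕ → ℝ)
    (hP : ∀ x, 0 ≤ P x)
    (hsupp : ∀ x, P x ≠ 0 → x ∈ Finset.Icc 1 n)
    (hsum : ∑ x ∈ Finset.Icc 1 n, P x = 1)
    (m : ℝ) (hm : m = ∑ i ∈ Finset.Icc 1 n, (i : ℝ) * P i)
    (rtfp s : ℕ → ℝ)
    (hrtfp : ∀ x, rtfp x = m - ∑ i ∈ Finset.Icc (x + 1) n, ((i : ℝ) - (x : ℝ)) * P i)
    (hs : ∀ x, s x = ∑ i ∈ Finset.Icc 1 n, (min i x : ℝ) * P i) :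
    ∀ x, rtfp x = s x :=
  rtfp_eq_working_set_general n P m hm rtfp s hrtfp hs
end

section
/- Given a 3-CNF formula φ with m clauses over n variables and f(x) = number of clauses satisfied by x, consider the trace: access A[m]; then for each x ∈ {0,1}^n in order, access A[f(x)]; then access A[m]. Then φ is satisfiable if and only if the trace contains a backward reuse interval with value strictly less than 2^n + 1 ending at an access to A[m]; equivalently, the final access to A[m] has reuse interval 2^n + 1 iff φ is unsatisfiable. -/
/-- A literal over `n` Boolean variables: variable index and polarity. -/
abbrev Lit (n : ℕ) := Fin n × Bool

/-- Clause `i` of the 3-CNF formula is satisfied by assignment `x`. -/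
def clauseSat {n m : ℕ} (C : Fin m → Lit n × Lit n × Lit n)
    (x : Fin n → Bool) (i : Fin m) : Prop :=
  x (C i).1.1 = (C i).1.2 ∨ x (C i).2.1.1 = (C i).2.1.2 ∨ x (C i).2.2.1 = (C i).2.2.2

instance {n m : ℕ} (C : Fin m → Lit n × Lit n × Lit n) (x : Fin n → Bool)
    (i : Fin m) : Decidable (clauseSat C x i) := by
  unfold clauseSat; infer_instance

/-- `f(x)`: the number of clauses of the formula satisfied by `x`. -/
def numSat {n m : ℕ} (C : Fin m → Lit n × Lit n × Lit n)
    (x : Fin n → Bool) : ℕ :=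
  (Finset.univ.filter (fun i : Fin m => clauseSat C x i)).card

/-- The `j`-th assignment in lexicographic order, via the bits of `j`. -/
def asg (n : ℕ) (j : ℕ) : Fin n → Bool := fun k => j.testBit k

/-- The trace: access `A[m]`; then, for each assignment `x` in order, access
`A[f(x)]`; finally access `A[m]` again.  (Time `0` and time `2^n + 1` are the
two boundary accesses to `A[m]`.) -/
def traceNP {n m : ℕ} (C : Fin m → Lit n × Lit n × Lit n) : ℕ → ℕ :=
  fun t => if t = 0 ∨ t = 2 ^ n + 1 then m else numSat C (asg n (t - 1))

/-!
Strictly between the two boundary accesses, `A[m]` is accessed exactly when `f(x) = m`, i.e. at a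
satisfying assignment, and every assignment occurs there because the bits of `j < 2^n`
enumerate `{0,1}^n`. So satisfiability means an interior access to `A[m]`. The first such access
closes a reuse interval shorter than `2^n + 1`; conversely a short interval cannot join the two
boundary accesses, so one of its ends is interior.
-/

theorem asg_apply_eq_finTwoEquiv (n : ℕ) (j : Fin (2 ^ n)) (k : Fin n) :
    asg n j k = finTwoEquiv (finFunctionFinEquiv.symm j k) := by
  have hval : (finFunctionFinEquiv.symm j k : ℕ) = j / 2 ^ (k : ℕ) % 2 := by
    simp [finFunctionFinEquiv]
  rw [asg, Nat.testBit_eq_decide_div_mod_eq, ← hval]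
  generalize finFunctionFinEquiv.symm j k = b
  fin_cases b <;> rfl

theorem exists_lt_asg_eq (n : ℕ) (x : Fin n → Bool) : ∃ j < 2 ^ n, asg n j = x := by
  let j := finFunctionFinEquiv (finTwoEquiv.symm ∘ x)
  refine ⟨j, j.is_lt, funext fun k => ?_⟩
  rw [asg_apply_eq_finTwoEquiv, Equiv.symm_apply_apply, Function.comp_apply,
    Equiv.apply_symm_apply]

theorem numSat_eq_iff {n m : ℕ} (C : Fin m → Lit n × Lit n × Lit n) (x : Fin n → Bool) :
    numSat C x = m ↔ ∀ i, clauseSat C x i := by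
  simpa [numSat] using Finset.card_filter_eq_iff (s := Finset.univ) (p := clauseSat C x)

theorem traceNP_eq_iff_of_pos_of_lt {n m : ℕ} (C : Fin m → Lit n × Lit n × Lit n) {s : ℕ}
    (hs₀ : 0 < s) (hs : s < 2 ^ n + 1) :
    traceNP C s = m ↔ ∀ i, clauseSat C (asg n (s - 1)) i := by
  rw [traceNP, if_neg (by omega), numSat_eq_iff]

theorem exists_interior_access_iff {n m : ℕ} (C : Fin m → Lit n × Lit n × Lit n) :
    (∃ s, 0 < s ∧ s < 2 ^ n + 1 ∧ traceNP C s = m) ↔ ∃ x, ∀ i, clauseSat C x i := by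
  constructor
  · rintro ⟨s, hs₀, hs, hsm⟩
    exact ⟨_, (traceNP_eq_iff_of_pos_of_lt C hs₀ hs).mp hsm⟩
  · rintro ⟨x, hx⟩
    obtain ⟨j, hj, rfl⟩ := exists_lt_asg_eq n x
    exact ⟨j + 1, by omega, by omega,
      (traceNP_eq_iff_of_pos_of_lt C (by omega) (by omega)).mpr hx⟩

theorem Nat.exists_least_pos_le {p : ℕ → Prop} {s : ℕ} (hs : 0 < s) (hp : p s) :
    ∃ t, 0 < t ∧ t ≤ s ∧ p t ∧ ∀ r, 0 < r → r < t → ¬ p r := by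
  classical
  have h : ∃ t, 0 < t ∧ p t := ⟨s, hs, hp⟩
  obtain ⟨ht₀, ht⟩ := Nat.find_spec h
  exact ⟨Nat.find h, ht₀, Nat.find_min' h ⟨hs, hp⟩, ht,
    fun r hr₀ hr hpr => Nat.find_min h hr ⟨hr₀, hpr⟩⟩

/-- NP-hardness gadget: `φ` is satisfiable iff the trace contains a backward
reuse interval of value strictly less than `2^n + 1` ending at an access to
`A[m]`; equivalently, the final access to `A[m]` has reuse interval `2^n + 1`
iff `φ` is unsatisfiable. -/
theorem sat_iff_short_ri
    (n m : ℕ) (C : Fin m → Lit n × Lit n × Lit n) :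
    ((∃ x : Fin n → Bool, ∀ i : Fin m, clauseSat C x i) ↔
      ∃ t t' : ℕ, t' < t ∧ t ≤ 2 ^ n + 1 ∧
        traceNP C t = m ∧ traceNP C t' = m ∧
        (∀ s, t' < s → s < t → traceNP C s ≠ m) ∧
        t - t' < 2 ^ n + 1) ∧
    ((∀ s, 0 < s → s < 2 ^ n + 1 → traceNP C s ≠ m) ↔
      ¬ ∃ x : Fin n → Bool, ∀ i : Fin m, clauseSat C x i) := by
  rw [← exists_interior_access_iff]
  refine ⟨⟨?_, ?_⟩, by push Not; rfl⟩
  · rintro ⟨s, hs₀, hs, hsm⟩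
    obtain ⟨t, ht₀, hts, htm, hfirst⟩ :=
      Nat.exists_least_pos_le (p := (traceNP C · = m)) hs₀ hsm
    refine ⟨t, 0, ht₀, by omega, htm, by simp [traceNP], hfirst, by omega⟩
  · rintro ⟨t, t', ht't, ht, htm, ht'm, -, hshort⟩
    rcases Nat.lt_or_ge t (2 ^ n + 1) with ht_lt | ht_ge
    · exact ⟨t, by omega, ht_lt, htm⟩
    · exact ⟨t', by omega, by omega, ht'm⟩
end
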